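/- (Ballistic transport upper bound) Let H = A + V on ℓ²(ℤ) where (Au)_n = Σ_k a_{n-k}u_k with |a_n| ≤ A₁e^{-a|n|}, a_{-n} = conj(a_n), and V real bounded. Let φ be finitely supported. Then for every q > 0, the upper transport exponent β⁺_φ(q) ≤ 1. -/

import Mathlib

/-!
Since `a (-k) = conj (a k)` and `V` is real, `H` is self-adjoint and `e^{-itH}` is unitary.
Because the hopping decays like `e^{-α|k|}`, `H` maps vectors bounded by `C e^{-λ|n|}`
(any `0 ≤ λ < α`) to vectors bounded by `M C e^{-λ|n|}`; summing the exponential series,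
`ψ_t = e^{-itH} φ` is bounded by `e^{M|t|} C e^{-λ|n|}`. Outside the ball `|n| ≤ 2M|t|/λ` this
gives `|ψ_t(n)|² ≤ C² e^{-λ|n|}`, whose `q`-th moment is bounded uniformly in `t`, while inside
the ball unitarity bounds the mass by `‖φ‖²`. So the `q`-th moment of `ψ_t` is `O((1 + t)^q)`,
its time average is `O(T^q)`, and `β⁺_φ(q) ≤ 1`.
-/

open scoped InnerProductSpace

noncomputable section

abbrev L2 := lp (fun _ : ℤ => ℂ) 2

def dl (n : ℤ) : L2 := lp.single 2 n (1 : ℂ)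

def U (H : L2 →L[ℂ] L2) (t : ℝ) : L2 →L[ℂ] L2 :=
  NormedSpace.exp ((-(t : ℂ) * Complex.I) • H)

def IsLongRange (a : ℤ → ℂ) (V : ℤ → ℝ) (H : L2 →L[ℂ] L2) : Prop :=
  ∀ (u : L2) (n : ℤ), (H u) n = (∑' k : ℤ, a k * u (n - k)) + (V n : ℂ) * u n

/-- The time-averaged `q`-th moment `⟨|X|^q_φ⟩(T)`. -/
def moment (H : L2 →L[ℂ] L2) (φ : L2) (q T : ℝ) : ℝ :=
  (2 / T) * ∫ t in Set.Ioi (0 : ℝ),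
    Real.exp (-2 * t / T) * ∑' n : ℤ, |(n : ℝ)| ^ q * ‖⟪U H t φ, dl n⟫_ℂ‖ ^ 2

/-- The upper transport exponent `β⁺_φ(q)`. -/
def beta (H : L2 →L[ℂ] L2) (φ : L2) (q : ℝ) : EReal :=
  Filter.limsup
    (fun T : ℝ => ((Real.log (moment H φ q T) / (q * Real.log T) : ℝ) : EReal))
    Filter.atTop

open MeasureTheory Filter Set

lemma rpow_le_one_add_pow_ceil {x q : ℝ} (hx : 0 ≤ x) (hq : 0 ≤ q) :
    x ^ q ≤ 1 + x ^ ⌈q⌉₊ := by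
  rcases le_total x 1 with h | h
  · linarith [Real.rpow_le_one hx h hq, pow_nonneg hx ⌈q⌉₊]
  · have := Real.rpow_le_rpow_of_exponent_le h (Nat.le_ceil q)
    rw [Real.rpow_natCast] at this
    linarith

lemma summable_abs_pow_mul_exp_neg_mul_abs (N : ℕ) {c : ℝ} (hc : 0 < c) :
    Summable fun k : ℤ => |(k : ℝ)| ^ N * Real.exp (-c * |(k : ℝ)|) := by
  rw [summable_int_iff_summable_nat_and_neg]
  constructor <;> simpa using Real.summable_pow_mul_exp_neg_nat_mul N hc

lemma summable_exp_neg_mul_abs {c : ℝ} (hc : 0 < c) :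
    Summable fun k : ℤ => Real.exp (-c * |(k : ℝ)|) := by
  simpa using summable_abs_pow_mul_exp_neg_mul_abs 0 hc

lemma summable_abs_rpow_mul_exp_neg_mul_abs {q c : ℝ} (hq : 0 ≤ q) (hc : 0 < c) :
    Summable fun k : ℤ => |(k : ℝ)| ^ q * Real.exp (-c * |(k : ℝ)|) := by
  refine ((summable_exp_neg_mul_abs hc).add
    (summable_abs_pow_mul_exp_neg_mul_abs ⌈q⌉₊ hc)).of_nonneg_of_le (fun k => by positivity)
    fun k => ?_
  rw [← one_add_mul]
  gcongr
  exact rpow_le_one_add_pow_ceil (abs_nonneg _) hq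

lemma one_add_rpow_le_mul_exp {x : ℝ} (hx : 0 ≤ x) (q : ℝ) :
    (1 + x) ^ q ≤ ⌈q⌉₊.factorial * Real.exp 1 * Real.exp x := by
  have h1 : (1 + x) ^ q ≤ (1 + x) ^ ⌈q⌉₊ := by
    rw [← Real.rpow_natCast]
    exact Real.rpow_le_rpow_of_exponent_le (by linarith) (Nat.le_ceil q)
  have h2 := Real.pow_div_factorial_le_exp (x := 1 + x) (by linarith) ⌈q⌉₊
  rw [div_le_iff₀ (by positivity), Real.exp_add] at h2
  linarith

lemma integral_Ioi_exp_neg_div (T : ℝ) (hT : 0 < T) :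
    ∫ t in Ioi (0 : ℝ), Real.exp (-t / T) = T := by
  have := integral_exp_mul_Ioi (neg_lt_zero.mpr (inv_pos.mpr hT)) 0
  simp only [mul_zero, Real.exp_zero] at this
  simpa [div_eq_inv_mul, neg_div] using this

lemma time_average_le {S : ℝ → ℝ} {q D : ℝ} (hq : 0 ≤ q)
    (hS0 : ∀ t, 0 < t → 0 ≤ S t) (hS : ∀ t, 0 < t → S t ≤ D * (1 + t) ^ q)
    {T : ℝ} (hT : 1 ≤ T) :
    (2 / T) * ∫ t in Ioi (0 : ℝ), Real.exp (-2 * t / T) * S t ≤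
      2 * ⌈q⌉₊.factorial * Real.exp 1 * D * T ^ q := by
  have hT0 : 0 < T := by linarith
  have hD : 0 ≤ D := by
    have := (hS0 1 one_pos).trans (hS 1 one_pos)
    exact nonneg_of_mul_nonneg_left this (by positivity)
  set K := ⌈q⌉₊.factorial * Real.exp 1 * D * T ^ q
  have hpoint : ∀ t ∈ Ioi (0 : ℝ), Real.exp (-2 * t / T) * S t ≤ K * Real.exp (-t / T) := by
    intro t (ht : 0 < t)
    have hgrowth : (1 + t) ^ q ≤ T ^ q * (⌈q⌉₊.factorial * Real.exp 1 * Real.exp (t / T)) := by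
      calc (1 + t) ^ q ≤ (T * (1 + t / T)) ^ q := by
            gcongr
            rw [mul_one_add, mul_div_cancel₀ t hT0.ne']
            linarith
        _ = T ^ q * (1 + t / T) ^ q := Real.mul_rpow hT0.le (by positivity)
        _ ≤ _ := by gcongr; exact one_add_rpow_le_mul_exp (by positivity) q
    have hexp : Real.exp (-2 * t / T) * Real.exp (t / T) = Real.exp (-t / T) := by
      rw [← Real.exp_add]; ring_nf
    calc Real.exp (-2 * t / T) * S t ≤ Real.exp (-2 * t / T) * (D * (1 + t) ^ q) := by
          gcongr; exact hS t ht
      _ ≤ Real.exp (-2 * t / T) * (D * (T ^ q * (⌈q⌉₊.factorial * Real.exp 1 *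
            Real.exp (t / T)))) := by gcongr
      _ = K * Real.exp (-t / T) := by rw [← hexp]; ring
  have hint : IntegrableOn (fun t => K * Real.exp (-t / T)) (Ioi 0) := by
    have := (integrableOn_exp_mul_Ioi (neg_lt_zero.mpr (inv_pos.mpr hT0)) 0).const_mul K
    simp only [div_eq_inv_mul, neg_mul, mul_neg] at this ⊢
    exact this
  calc (2 / T) * ∫ t in Ioi (0 : ℝ), Real.exp (-2 * t / T) * S t
      ≤ (2 / T) * ∫ t in Ioi (0 : ℝ), K * Real.exp (-t / T) := by
        refine mul_le_mul_of_nonneg_left (integral_mono_of_nonneg ?_ hint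
          ((ae_restrict_mem measurableSet_Ioi).mono hpoint)) (by positivity)
        exact (ae_restrict_mem measurableSet_Ioi).mono fun t ht => by
          have := hS0 t ht; positivity
    _ = 2 * K := by
        rw [integral_const_mul, integral_Ioi_exp_neg_div T hT0]; field_simp
    _ = _ := by ring

lemma limsup_log_div_mul_log_le_one {F : ℝ → ℝ} {q C : ℝ} (hq : 0 < q)
    (hF : ∀ᶠ T in atTop, |F T| ≤ C * T ^ q) :
    limsup (fun T : ℝ => ((Real.log (F T) / (q * Real.log T) : ℝ) : EReal)) atTop ≤ 1 := by
  set C' := max C 1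
  have hratio : ∀ᶠ T : ℝ in atTop,
      ((Real.log (F T) / (q * Real.log T) : ℝ) : EReal) ≤
        ((1 + Real.log C' / (q * Real.log T) : ℝ) : EReal) := by
    filter_upwards [hF, eventually_gt_atTop 1] with T hFT hT
    have hlogT : 0 < q * Real.log T := mul_pos hq (Real.log_pos hT)
    have hTq : 1 ≤ T ^ q := Real.one_le_rpow hT.le hq.le
    have hlogF : Real.log (F T) ≤ Real.log C' + q * Real.log T := by
      rw [← Real.log_rpow (by linarith), ← Real.log_mul (by positivity) (by positivity),
        ← Real.log_abs]
      rcases (abs_nonneg (F T)).eq_or_lt with h0 | hpos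
      · rw [← h0, Real.log_zero]
        exact Real.log_nonneg (one_le_mul_of_one_le_of_one_le (le_max_right C 1) hTq)
      · exact Real.log_le_log hpos (hFT.trans (by gcongr; exact le_max_left C 1))
    rw [EReal.coe_le_coe_iff, one_add_div hlogT.ne', div_le_div_iff_of_pos_right hlogT]
    linarith
  have hlim : Tendsto (fun T : ℝ => ((1 + Real.log C' / (q * Real.log T) : ℝ) : EReal))
      atTop (nhds 1) := by
    have := (Real.tendsto_log_atTop.const_mul_atTop hq).const_div_atTop (Real.log C')
    simpa using EReal.tendsto_coe.mpr (this.const_add 1)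
  exact (limsup_le_limsup hratio).trans_eq hlim.limsup_eq

lemma dl_apply (n m : ℤ) : dl n m = if m = n then 1 else 0 := by
  simp [dl, lp.single_apply, Pi.single_apply]

lemma inner_dl_right (f : L2) (n : ℤ) : ⟪f, dl n⟫_ℂ = starRingEnd ℂ (f n) := by
  simp [dl, lp.inner_single_right, RCLike.inner_apply]

lemma hasSum_norm_sq (f : L2) : HasSum (fun n => ‖f n‖ ^ 2) (‖f‖ ^ 2) := by
  have := lp.hasSum_inner (𝕜 := ℂ) f f
  simp only [inner_self_eq_norm_sq_to_K] at this
  exact_mod_cast this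

lemma isSelfAdjoint_of_inner_dl {T : L2 →L[ℂ] L2}
    (hT : ∀ (u : L2) (n : ℤ), ⟪T u, dl n⟫_ℂ = ⟪u, T (dl n)⟫_ℂ) : IsSelfAdjoint T := by
  rw [ContinuousLinearMap.isSelfAdjoint_iff_isSymmetric]
  intro u v
  have hv : HasSum (fun n => v n • dl n) v := by
    simpa [dl, ← lp.single_smul] using lp.hasSum_single ENNReal.ofNat_ne_top v
  refine (by simpa using hv.mapL (innerSL ℂ (T u)) : HasSum _ ⟪T u, v⟫_ℂ).unique ?_
  simpa [inner_smul_right, hT] using hv.mapL ((innerSL ℂ u).comp T)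

lemma summable_norm_of_le_exp {a : ℤ → ℂ} {A₁ α : ℝ} (hα : 0 < α)
    (ha : ∀ k : ℤ, ‖a k‖ ≤ A₁ * Real.exp (-α * |(k : ℝ)|)) :
    Summable fun k => ‖a k‖ :=
  ((summable_exp_neg_mul_abs hα).mul_left A₁).of_nonneg_of_le (fun _ => norm_nonneg _) ha

namespace IsLongRange

variable {a : ℤ → ℂ} {V : ℤ → ℝ} {H : L2 →L[ℂ] L2}

lemma apply_dl (hH : IsLongRange a V H) (n m : ℤ) :
    H (dl n) m = a (m - n) + if m = n then (V m : ℂ) else 0 := by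
  rw [hH, dl_apply]
  congr 1
  · rw [tsum_eq_single (m - n) fun k hk => by rw [dl_apply, if_neg (by omega), mul_zero]]
    simp [dl_apply]
  · split_ifs <;> simp

lemma inner_apply_dl (hH : IsLongRange a V H) (ha : Summable fun k => ‖a k‖)
    (hsym : ∀ k : ℤ, a (-k) = starRingEnd ℂ (a k)) (u : L2) (n : ℤ) :
    ⟪H u, dl n⟫_ℂ = ⟪u, H (dl n)⟫_ℂ := by
  have hconv : (∑' k, a k * u (n - k)) = ∑' m, a (n - m) * u m :=
    (tsum_congr fun k => by simp).trans ((Equiv.subLeft n).tsum_eq fun m => a (n - m) * u m)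
  have hsummable : Summable fun m => starRingEnd ℂ (u m) * a (m - n) := by
    have := (ha.comp_injective (Equiv.subRight n).injective).mul_left ‖u‖
    refine Summable.of_norm (this.of_nonneg_of_le (fun _ => norm_nonneg _) fun m => ?_)
    rw [norm_mul, Complex.norm_conj]
    exact mul_le_mul_of_nonneg_right (lp.norm_apply_le_norm two_ne_zero u _) (norm_nonneg _)
  have hdiag : (∑' m, starRingEnd ℂ (u m) * if m = n then (V m : ℂ) else 0)
      = starRingEnd ℂ (u n) * V n := by
    rw [tsum_eq_single n fun m hm => by rw [if_neg hm, mul_zero], if_pos rfl]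
  rw [inner_dl_right, hH, hconv, lp.inner_eq_tsum]
  simp only [RCLike.inner_apply', apply_dl hH, mul_add]
  rw [hsummable.tsum_add ⟨_, hasSum_single n fun m hm => by rw [if_neg hm, mul_zero]⟩, hdiag,
    map_add, Complex.conj_tsum]
  congr 1
  · refine tsum_congr fun m => ?_
    rw [map_mul, ← hsym, neg_sub, mul_comm]
  · simp [mul_comm]

lemma isSelfAdjoint (hH : IsLongRange a V H) (ha : Summable fun k => ‖a k‖)
    (hsym : ∀ k : ℤ, a (-k) = starRingEnd ℂ (a k)) : IsSelfAdjoint H :=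
  isSelfAdjoint_of_inner_dl (hH.inner_apply_dl ha hsym)

end IsLongRange

def IsExpBoundedBy (ψ : L2) (C lam : ℝ) : Prop :=
  ∀ n : ℤ, ‖ψ n‖ ≤ C * Real.exp (-lam * |(n : ℝ)|)

lemma IsExpBoundedBy.nonneg {ψ : L2} {C lam : ℝ} (hψ : IsExpBoundedBy ψ C lam) : 0 ≤ C := by
  simpa using (norm_nonneg _).trans (hψ 0)

lemma isExpBoundedBy_of_apply_eq_zero {φ : L2} {K : ℤ} (hφ : ∀ n : ℤ, K < |n| → φ n = 0)
    {lam : ℝ} (hlam : 0 ≤ lam) : IsExpBoundedBy φ (‖φ‖ * Real.exp (lam * K)) lam := by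
  intro n
  rcases le_or_gt |n| K with hn | hn
  · have hnK : |(n : ℝ)| ≤ K := by exact_mod_cast hn
    calc ‖φ n‖ ≤ ‖φ‖ * 1 := by simpa using lp.norm_apply_le_norm two_ne_zero φ n
      _ ≤ ‖φ‖ * (Real.exp (lam * K) * Real.exp (-lam * |(n : ℝ)|)) := by
          rw [← Real.exp_add]
          gcongr
          exact Real.one_le_exp (by nlinarith)
      _ = _ := by ring
  · rw [hφ n hn, norm_zero]
    positivity

lemma IsLongRange.isExpBoundedBy_apply {a : ℤ → ℂ} {V : ℤ → ℝ} {H : L2 →L[ℂ] L2}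
    {A₁ α Vbd lam : ℝ} (hH : IsLongRange a V H)
    (ha : ∀ k : ℤ, ‖a k‖ ≤ A₁ * Real.exp (-α * |(k : ℝ)|)) (hV : ∀ n : ℤ, |V n| ≤ Vbd)
    (hlam₀ : 0 ≤ lam) (hlam : lam < α) {ψ : L2} {C : ℝ} (hψ : IsExpBoundedBy ψ C lam) :
    IsExpBoundedBy (H ψ)
      ((A₁ * ∑' k : ℤ, Real.exp (-(α - lam) * |(k : ℝ)|) + Vbd) * C) lam := by
  intro n
  have hC := hψ.nonneg
  have hA₁ : 0 ≤ A₁ := by simpa using (norm_nonneg _).trans (ha 0)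
  have hweight : ∀ k : ℤ,
      Real.exp (-α * |(k : ℝ)|) * Real.exp (-lam * |((n - k : ℤ) : ℝ)|) ≤
        Real.exp (-lam * |(n : ℝ)|) * Real.exp (-(α - lam) * |(k : ℝ)|) := by
    intro k
    have htri : |(n : ℝ)| ≤ |(k : ℝ)| + |((n - k : ℤ) : ℝ)| := by
      push_cast
      simpa using abs_add_le (k : ℝ) (n - k)
    rw [← Real.exp_add, ← Real.exp_add]
    exact Real.exp_le_exp.mpr (by nlinarith)
  set w := Real.exp (-lam * |(n : ℝ)|)
  have hterm : ∀ k : ℤ, ‖a k * ψ (n - k)‖ ≤ A₁ * C * w * Real.exp (-(α - lam) * |(k : ℝ)|) := by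
    intro k
    calc ‖a k * ψ (n - k)‖
        ≤ A₁ * Real.exp (-α * |(k : ℝ)|) * (C * Real.exp (-lam * |((n - k : ℤ) : ℝ)|)) := by
          rw [norm_mul]
          exact mul_le_mul (ha k) (hψ _) (norm_nonneg _) (by positivity)
      _ = A₁ * C * (Real.exp (-α * |(k : ℝ)|) * Real.exp (-lam * |((n - k : ℤ) : ℝ)|)) := by
          ring
      _ ≤ A₁ * C * (w * Real.exp (-(α - lam) * |(k : ℝ)|)) :=
          mul_le_mul_of_nonneg_left (hweight k) (by positivity)
      _ = _ := by ring
  have hsum := ((summable_exp_neg_mul_abs (sub_pos.mpr hlam)).mul_left (A₁ * C * w)).hasSum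
  have hVn : ‖(V n : ℂ) * ψ n‖ ≤ Vbd * (C * w) := by
    rw [norm_mul, Complex.norm_real, Real.norm_eq_abs]
    exact mul_le_mul (hV n) (hψ n) (norm_nonneg _) ((abs_nonneg _).trans (hV n))
  rw [hH]
  calc ‖(∑' k, a k * ψ (n - k)) + (V n : ℂ) * ψ n‖
      ≤ ‖∑' k, a k * ψ (n - k)‖ + ‖(V n : ℂ) * ψ n‖ := norm_add_le _ _
    _ ≤ (∑' k : ℤ, A₁ * C * w * Real.exp (-(α - lam) * |(k : ℝ)|)) + Vbd * (C * w) :=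
        add_le_add (tsum_of_norm_bounded hsum hterm) hVn
    _ = _ := by rw [tsum_mul_left]; ring

lemma IsExpBoundedBy.pow_apply {T : L2 →L[ℂ] L2} {M lam : ℝ}
    (hT : ∀ ψ C, IsExpBoundedBy ψ C lam → IsExpBoundedBy (T ψ) (M * C) lam)
    {φ : L2} {C : ℝ} (hφ : IsExpBoundedBy φ C lam) (m : ℕ) :
    IsExpBoundedBy ((T ^ m) φ) (M ^ m * C) lam := by
  induction m with
  | zero => simpa using hφ
  | succ m ih => simpa [pow_succ', mul_assoc] using hT _ _ ih

lemma hasSum_U_apply (T : L2 →L[ℂ] L2) (t : ℝ) (φ : L2) (n : ℤ) :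
    HasSum (fun m : ℕ => ((m.factorial : ℂ)⁻¹ * (-(t : ℂ) * Complex.I) ^ m) * (T ^ m) φ n)
      (U T t φ n) := by
  let evalAt : (L2 →L[ℂ] L2) →L[ℂ] ℂ :=
    (innerSL ℂ (dl n)).comp (ContinuousLinearMap.apply ℂ L2 φ)
  have hevalAt : ∀ S : L2 →L[ℂ] L2, evalAt S = S φ n := fun S => by
    simp [evalAt, dl, lp.inner_single_left]
  have := (NormedSpace.exp_series_hasSum_exp' (𝕂 := ℂ) ((-(t : ℂ) * Complex.I) • T)).mapL evalAt
  rw [hevalAt] at this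
  refine this.congr_fun fun m => ?_
  rw [hevalAt, smul_pow]
  simp [mul_assoc]

lemma IsExpBoundedBy.U_apply {T : L2 →L[ℂ] L2} {M lam : ℝ}
    (hT : ∀ ψ C, IsExpBoundedBy ψ C lam → IsExpBoundedBy (T ψ) (M * C) lam)
    {φ : L2} {C : ℝ} (hφ : IsExpBoundedBy φ C lam) (t : ℝ) :
    IsExpBoundedBy (U T t φ) (Real.exp (M * |t|) * C) lam := by
  intro n
  have hterm : ∀ m : ℕ, ‖((m.factorial : ℂ)⁻¹ * (-(t : ℂ) * Complex.I) ^ m) * (T ^ m) φ n‖ ≤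
      (M * |t|) ^ m / m.factorial * (C * Real.exp (-lam * |(n : ℝ)|)) := by
    intro m
    rw [norm_mul, norm_mul, norm_pow, norm_mul, norm_neg, Complex.norm_real, Complex.norm_I,
      mul_one, norm_inv, Complex.norm_natCast, Real.norm_eq_abs]
    calc (m.factorial : ℝ)⁻¹ * |t| ^ m * ‖(T ^ m) φ n‖
        ≤ (m.factorial : ℝ)⁻¹ * |t| ^ m * (M ^ m * C * Real.exp (-lam * |(n : ℝ)|)) := by
          gcongr; exact hφ.pow_apply hT m n
      _ = _ := by ring
  have hsum : HasSum
      (fun m : ℕ => (M * |t|) ^ m / m.factorial * (C * Real.exp (-lam * |(n : ℝ)|)))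
      (Real.exp (M * |t|) * (C * Real.exp (-lam * |(n : ℝ)|))) := by
    rw [Real.exp_eq_exp_ℝ]
    exact (NormedSpace.expSeries_div_hasSum_exp (M * |t|)).mul_right _
  rw [mul_assoc, ← (hasSum_U_apply T t φ n).tsum_eq]
  exact tsum_of_norm_bounded hsum hterm

lemma U_mem_unitary {T : L2 →L[ℂ] L2} (hT : IsSelfAdjoint T) (t : ℝ) :
    U T t ∈ unitary (L2 →L[ℂ] L2) := by
  have hskew : (-(t : ℂ) * Complex.I) • T ∈ skewAdjoint (L2 →L[ℂ] L2) := by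
    rw [skewAdjoint.mem_iff, star_smul, hT.star_eq, ← neg_smul]
    congr 1
    simp
  -- `NormedSpace.exp` lemmas are stated for normed `ℚ`-algebras
  let : NormedAlgebra ℚ (L2 →L[ℂ] L2) := NormedAlgebra.restrictScalars ℚ ℂ _
  exact NormedSpace.exp_mem_unitary_of_mem_skewAdjoint hskew

lemma IsExpBoundedBy.tsum_abs_rpow_mul_norm_sq_le {ψ : L2} {C s lam q : ℝ}
    (hψ : IsExpBoundedBy ψ (Real.exp s * C) lam) (hs : 0 ≤ s) (hlam : 0 < lam) (hq : 0 ≤ q) :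
    ∑' n : ℤ, |(n : ℝ)| ^ q * ‖ψ n‖ ^ 2 ≤
      (2 * s / lam) ^ q * ‖ψ‖ ^ 2
        + C ^ 2 * ∑' n : ℤ, |(n : ℝ)| ^ q * Real.exp (-lam * |(n : ℝ)|) := by
  set R := 2 * s / lam
  have hpoint : ∀ n : ℤ, |(n : ℝ)| ^ q * ‖ψ n‖ ^ 2 ≤
      R ^ q * ‖ψ n‖ ^ 2 + C ^ 2 * (|(n : ℝ)| ^ q * Real.exp (-lam * |(n : ℝ)|)) := by
    intro n
    rcases le_or_gt |(n : ℝ)| R with hn | hn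
    · have : |(n : ℝ)| ^ q ≤ R ^ q := Real.rpow_le_rpow (abs_nonneg _) hn hq
      exact le_add_of_le_of_nonneg (mul_le_mul_of_nonneg_right this (sq_nonneg _))
        (by positivity)
    · have h2s : 2 * s ≤ lam * |(n : ℝ)| := by
        rw [div_lt_iff₀' hlam] at hn; linarith [mul_comm lam |(n : ℝ)|]
      have hsq : ‖ψ n‖ ^ 2 ≤ C ^ 2 * Real.exp (-lam * |(n : ℝ)|) := by
        calc ‖ψ n‖ ^ 2 ≤ (Real.exp s * C * Real.exp (-lam * |(n : ℝ)|)) ^ 2 :=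
              pow_le_pow_left₀ (norm_nonneg _) (hψ n) 2
          _ = C ^ 2 * (Real.exp (s + -lam * |(n : ℝ)|) * Real.exp (s + -lam * |(n : ℝ)|)) := by
              rw [Real.exp_add]; ring
          _ ≤ C ^ 2 * Real.exp (-lam * |(n : ℝ)|) := by
              rw [← Real.exp_add]; gcongr; linarith
      calc |(n : ℝ)| ^ q * ‖ψ n‖ ^ 2
          ≤ |(n : ℝ)| ^ q * (C ^ 2 * Real.exp (-lam * |(n : ℝ)|)) := by gcongr
        _ ≤ _ := by rw [mul_left_comm]; exact le_add_of_nonneg_left (by positivity)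
  have hsum := ((hasSum_norm_sq ψ).mul_left (R ^ q)).add
    ((summable_abs_rpow_mul_exp_neg_mul_abs hq hlam).hasSum.mul_left (C ^ 2))
  rw [← hsum.tsum_eq]
  exact Summable.tsum_le_tsum hpoint (hsum.summable.of_nonneg_of_le (fun _ => by positivity)
    hpoint) hsum.summable

lemma norm_inner_dl_right (f : L2) (n : ℤ) : ‖⟪f, dl n⟫_ℂ‖ = ‖f n‖ := by
  rw [inner_dl_right, Complex.norm_conj]

lemma moment_nonneg (H : L2 →L[ℂ] L2) (φ : L2) (q : ℝ) {T : ℝ} (hT : 0 ≤ T) :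
    0 ≤ moment H φ q T :=
  mul_nonneg (by positivity) <| integral_nonneg fun t =>
    mul_nonneg (Real.exp_pos _).le (tsum_nonneg fun n => by positivity)

lemma tsum_abs_rpow_mul_norm_inner_U_sq_le {T : L2 →L[ℂ] L2} (hT : IsSelfAdjoint T)
    {M lam q C : ℝ} (hM : 0 ≤ M) (hlam : 0 < lam) (hq : 0 ≤ q)
    (hstep : ∀ ψ C, IsExpBoundedBy ψ C lam → IsExpBoundedBy (T ψ) (M * C) lam)
    {φ : L2} (hφ : IsExpBoundedBy φ C lam) {t : ℝ} (ht : 0 ≤ t) :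
    ∑' n : ℤ, |(n : ℝ)| ^ q * ‖⟪U T t φ, dl n⟫_ℂ‖ ^ 2 ≤
      ((2 * M / lam) ^ q * ‖φ‖ ^ 2
        + C ^ 2 * ∑' n : ℤ, |(n : ℝ)| ^ q * Real.exp (-lam * |(n : ℝ)|)) * (1 + t) ^ q := by
  have hψ : IsExpBoundedBy (U T t φ) (Real.exp (M * t) * C) lam := by
    simpa [abs_of_nonneg ht] using hφ.U_apply hstep t
  have hbound := hψ.tsum_abs_rpow_mul_norm_sq_le (by positivity) hlam hq
  rw [ContinuousLinearMap.norm_map_of_mem_unitary (U_mem_unitary hT t) φ,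
    show 2 * (M * t) / lam = 2 * M / lam * t by ring, Real.mul_rpow (by positivity) ht] at hbound
  have htq : t ^ q ≤ (1 + t) ^ q := Real.rpow_le_rpow ht (by linarith) hq
  have h1tq : 1 ≤ (1 + t) ^ q := Real.one_le_rpow (by linarith) hq
  have htail : 0 ≤ C ^ 2 * ∑' n : ℤ, |(n : ℝ)| ^ q * Real.exp (-lam * |(n : ℝ)|) :=
    mul_nonneg (sq_nonneg C) (tsum_nonneg fun n => by positivity)
  simp only [norm_inner_dl_right]
  refine hbound.trans ?_
  rw [add_mul, mul_right_comm]
  exact add_le_add (mul_le_mul_of_nonneg_left htq (by positivity))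
    (le_mul_of_one_le_right htail h1tq)

theorem stmt13_general (a : ℤ → ℂ) (V : ℤ → ℝ) (H : L2 →L[ℂ] L2) (A₁ α Vbd : ℝ)
    (hα : 0 < α)
    (ha : ∀ k : ℤ, ‖a k‖ ≤ A₁ * Real.exp (-α * |(k : ℝ)|))
    (hsym : ∀ k : ℤ, a (-k) = starRingEnd ℂ (a k))
    (hV : ∀ n : ℤ, |V n| ≤ Vbd)
    (hH : IsLongRange a V H)
    (φ : L2) (hφ : ∃ K₁ : ℤ, ∀ n : ℤ, K₁ < |n| → φ n = 0) :
    ∀ q : ℝ, 0 < q → beta H φ q ≤ (1 : EReal) := by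
  intro q hq
  obtain ⟨K₁, hK₁⟩ := hφ
  have hlam : 0 < α / 2 := half_pos hα
  have hM : 0 ≤ A₁ * ∑' k : ℤ, Real.exp (-(α - α / 2) * |(k : ℝ)|) + Vbd := by
    have hA₁ : 0 ≤ A₁ := by simpa using (norm_nonneg _).trans (ha 0)
    have hVbd : 0 ≤ Vbd := (abs_nonneg _).trans (hV 0)
    have : 0 ≤ ∑' k : ℤ, Real.exp (-(α - α / 2) * |(k : ℝ)|) :=
      tsum_nonneg fun k => (Real.exp_pos _).le
    positivity
  have hstep := fun ψ C (hψ : IsExpBoundedBy ψ C (α / 2)) =>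
    hH.isExpBoundedBy_apply ha hV hlam.le (half_lt_self hα) hψ
  have hspread := fun t (ht : 0 < t) => tsum_abs_rpow_mul_norm_inner_U_sq_le
    (hH.isSelfAdjoint (summable_norm_of_le_exp hα ha) hsym) hM hlam hq.le hstep
    (isExpBoundedBy_of_apply_eq_zero hK₁ hlam.le) ht.le
  have hmoment := fun T (hT : 1 ≤ T) =>
    (abs_of_nonneg (moment_nonneg H φ q (by linarith))).trans_le
      (time_average_le hq.le (fun t _ => tsum_nonneg fun n => by positivity) hspread hT)
  exact limsup_log_div_mul_log_le_one hq ((eventually_ge_atTop 1).mono hmoment)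

/-- ballistic transport upper bound: for the long-range operator
`H = A + V` with exponentially decaying hopping and bounded real `V`, and any
finitely supported `φ`, the upper transport exponent satisfies `β⁺_φ(q) ≤ 1`
for every `q > 0`. -/
theorem stmt13 (a : ℤ → ℂ) (V : ℤ → ℝ) (H : L2 →L[ℂ] L2) (A₁ α Vbd : ℝ)
    (hA₁ : 0 < A₁) (hα : 0 < α) (hVbd : 0 ≤ Vbd)
    (ha : ∀ k : ℤ, ‖a k‖ ≤ A₁ * Real.exp (-α * |(k : ℝ)|))
    (hsym : ∀ k : ℤ, a (-k) = starRingEnd ℂ (a k))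
    (hV : ∀ n : ℤ, |V n| ≤ Vbd)
    (hH : IsLongRange a V H)
    (φ : L2) (hφ : ∃ K₁ : ℤ, ∀ n : ℤ, K₁ < |n| → φ n = 0) :
    ∀ q : ℝ, 0 < q → beta H φ q ≤ (1 : EReal) :=
  stmt13_general a V H A₁ α Vbd hα ha hsym hV hH φ hφ
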